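/- arXiv:2205.10582 — 4 statements merged into one kernel-verified Lean document; each statement's English description precedes it below -/
import Mathlib

section
/- Let a, b, c, d be positive integers with b > 1, d > 1 and a(b-1) = c(d-1) = N. Let r_1, ..., r_N be the distinct residues in {1, ..., ab-1} not divisible by b, and s_1, ..., s_N the distinct residues in {1, ..., cd-1} not divisible by d. Then the function f : ℕ → ℕ defined by f(bn) = dn and f(abn + r_i) = cdn + s_i (for i = 1, ..., N) is well-defined on all of ℕ and is a bijection from ℕ onto ℕ. -/
/-- Any function `f : ℕ → ℕ` satisfying `f (b*n) = d*n` and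
`f (a*b*n + r i) = c*d*n + s i`, where `r` enumerates the residues in `{1,…,ab-1}`
not divisible by `b` and `s` enumerates the residues in `{1,…,cd-1}` not divisible
by `d`, is a bijection from ℕ onto ℕ. -/
theorem stmt0 (a b c d N : ℕ) (ha : 0 < a) (hc : 0 < c) (hb : 1 < b) (hd : 1 < d)
    (hNa : N = a * (b - 1)) (hNc : N = c * (d - 1))
    (r s : Fin N → ℕ)
    (hrinj : Function.Injective r) (hsinj : Function.Injective s)
    (hrran : Set.range r = {x : ℕ | 0 < x ∧ x < a * b ∧ ¬ b ∣ x})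
    (hsran : Set.range s = {x : ℕ | 0 < x ∧ x < c * d ∧ ¬ d ∣ x})
    (f : ℕ → ℕ)
    (hf1 : ∀ n : ℕ, f (b * n) = d * n)
    (hf2 : ∀ (n : ℕ) (i : Fin N), f (a * b * n + r i) = c * d * n + s i) :
    Function.Bijective f := by
  have hab : 0 < a * b := Nat.mul_pos ha (lt_trans one_pos hb)
  have hcd : 0 < c * d := Nat.mul_pos hc (lt_trans one_pos hd)
  -- properties of r and s
  have hrprop : ∀ i, 0 < r i ∧ r i < a * b ∧ ¬ b ∣ r i := by
    intro i
    have : r i ∈ Set.range r := Set.mem_range_self i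
    rw [hrran] at this; exact this
  have hsprop : ∀ i, 0 < s i ∧ s i < c * d ∧ ¬ d ∣ s i := by
    intro i
    have : s i ∈ Set.range s := Set.mem_range_self i
    rw [hsran] at this; exact this
  -- decomposition for non-multiples of b
  have hdec : ∀ x : ℕ, ¬ b ∣ x → ∃ (n : ℕ) (i : Fin N), x = a * b * n + r i := by
    intro x hx
    have hmod : ¬ b ∣ (x % (a * b)) := by
      intro h
      exact hx ((Nat.dvd_mod_iff ⟨a, mul_comm a b⟩).mp h)
    have hmem : x % (a * b) ∈ {y : ℕ | 0 < y ∧ y < a * b ∧ ¬ b ∣ y} := by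
      refine ⟨Nat.pos_of_ne_zero ?_, Nat.mod_lt _ hab, hmod⟩
      intro h; rw [h] at hmod; exact hmod (dvd_zero b)
    rw [← hrran] at hmem
    obtain ⟨i, hi⟩ := hmem
    exact ⟨x / (a * b), i, by rw [hi]; exact (Nat.div_add_mod x (a * b)).symm⟩
  constructor
  · intro x y hxy
    by_cases hx : b ∣ x <;> by_cases hy : b ∣ y
    · obtain ⟨m, rfl⟩ := hx; obtain ⟨n, rfl⟩ := hy
      rw [hf1, hf1] at hxy
      have : m = n := Nat.eq_of_mul_eq_mul_left (lt_trans one_pos hd) hxy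
      rw [this]
    · obtain ⟨m, rfl⟩ := hx
      obtain ⟨n, i, rfl⟩ := hdec y hy
      rw [hf1, hf2] at hxy
      exfalso
      obtain ⟨_, _, hds⟩ := hsprop i
      have h1 : d ∣ d * m := dvd_mul_right _ _
      have h2 : d ∣ c * d * n := ⟨c * n, by ring⟩
      have h3 : s i = d * m - c * d * n := by omega
      exact hds (h3 ▸ Nat.dvd_sub h1 h2)
    · obtain ⟨n, rfl⟩ := hy
      obtain ⟨m, i, rfl⟩ := hdec x hx
      rw [hf1, hf2] at hxy
      exfalso
      obtain ⟨_, _, hds⟩ := hsprop i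
      have h1 : d ∣ d * n := dvd_mul_right _ _
      have h2 : d ∣ c * d * m := ⟨c * m, by ring⟩
      have h3 : s i = d * n - c * d * m := by omega
      exact hds (h3 ▸ Nat.dvd_sub h1 h2)
    · obtain ⟨m, i, rfl⟩ := hdec x hx
      obtain ⟨n, j, rfl⟩ := hdec y hy
      rw [hf2, hf2] at hxy
      obtain ⟨_, hsi, _⟩ := hsprop i
      obtain ⟨_, hsj, _⟩ := hsprop j
      have hmn : m = n := by nlinarith [hxy]
      subst hmn
      have : s i = s j := by omega
      rw [hsinj this]
  · intro y
    by_cases hy : d ∣ y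
    · obtain ⟨n, rfl⟩ := hy
      exact ⟨b * n, hf1 n⟩
    · have hmod : ¬ d ∣ (y % (c * d)) := by
        intro h
        exact hy ((Nat.dvd_mod_iff ⟨c, mul_comm c d⟩).mp h)
      have hmem : y % (c * d) ∈ {x : ℕ | 0 < x ∧ x < c * d ∧ ¬ d ∣ x} := by
        refine ⟨Nat.pos_of_ne_zero ?_, Nat.mod_lt _ hcd, hmod⟩
        intro h; rw [h] at hmod; exact hmod (dvd_zero d)
      rw [← hsran] at hmem
      obtain ⟨i, hi⟩ := hmem
      refine ⟨a * b * (y / (c * d)) + r i, ?_⟩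
      rw [hf2, hi]
      exact Nat.div_add_mod y (c * d)
end

section
/- Consider the permutation f : ℕ → ℕ given by f(6n) = 3n, and f(12n + r_i) = 15n + s_i where (r_1,...,r_10) = (1,2,3,4,5,7,8,9,10,11) and (s_1,...,s_10) = (1,2,4,5,7,8,10,11,13,14). Then for every x ≥ 6 with x not divisible by 6, we have f(x) > x and f(x) is not divisible by 3 (hence not by 6), so the forward orbit of x under f is strictly increasing and thus infinite. In particular f has infinitely many divergent trajectories. -/
/-- The residue map sending `r_i ∈ (1,2,3,4,5,7,8,9,10,11)` (mod 12) to
`s_i ∈ (1,2,4,5,7,8,10,11,13,14)` (mod 15). -/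
def sigma2653 : ℕ → ℕ
  | 1 => 1 | 2 => 2 | 3 => 4 | 4 => 5 | 5 => 7
  | 7 => 8 | 8 => 10 | 9 => 11 | 10 => 13 | 11 => 14
  | _ => 0

/-- The permutation `P(2,6,5,3)`: `f(6n) = 3n`, `f(12n + r_i) = 15n + s_i`. -/
def p2653 : ℕ → ℕ := fun x =>
  if x % 6 = 0 then x / 2 else 15 * (x / 12) + sigma2653 (x % 12)

lemma p2653_key (x : ℕ) (hx : 6 ≤ x) (h6 : ¬ 6 ∣ x) :
    x < p2653 x ∧ ¬ 3 ∣ p2653 x := by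
  obtain ⟨q, r, hr12, rfl⟩ : ∃ q r, r < 12 ∧ x = 12 * q + r :=
    ⟨x / 12, x % 12, Nat.mod_lt _ (by norm_num), by omega⟩
  have hmod : (12 * q + r) % 12 = r := by omega
  have hdiv : (12 * q + r) / 12 = q := by omega
  have hm6 : ¬ (12 * q + r) % 6 = 0 := by omega
  interval_cases r <;>
    simp only [p2653, sigma2653, hmod, hdiv, if_neg hm6] <;> omega

/-- for every `x ≥ 6` not divisible by 6, `f x > x` and `3 ∤ f x`
(hence `6 ∤ f x`), the forward orbit of `x` is strictly increasing (hence infinite);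
and `f` has infinitely many divergent trajectories (infinitely many `x` whose orbit
map `k ↦ f^[k] x` is injective, i.e. has infinitely many distinct elements). -/
theorem stmt6 :
    (∀ x : ℕ, 6 ≤ x → ¬ 6 ∣ x →
      x < p2653 x ∧ ¬ 3 ∣ p2653 x ∧ ¬ 6 ∣ p2653 x ∧
        StrictMono (fun k => p2653^[k] x)) ∧
      {x : ℕ | Function.Injective fun k => p2653^[k] x}.Infinite := by
  have main : ∀ x : ℕ, 6 ≤ x → ¬ 6 ∣ x →
      x < p2653 x ∧ ¬ 3 ∣ p2653 x ∧ ¬ 6 ∣ p2653 x ∧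
        StrictMono (fun k => p2653^[k] x) := by
    intro x hx h6
    obtain ⟨h1, h2⟩ := p2653_key x hx h6
    have h3 : ¬ 6 ∣ p2653 x := fun h => h2 (dvd_trans (by norm_num) h)
    refine ⟨h1, h2, h3, ?_⟩
    have inv : ∀ k, 6 ≤ p2653^[k] x ∧ ¬ 6 ∣ p2653^[k] x := by
      intro k
      induction k with
      | zero => exact ⟨hx, h6⟩
      | succ n ih =>
        obtain ⟨ha, hb⟩ := ih
        obtain ⟨hlt, hnd⟩ := p2653_key _ ha hb
        rw [Function.iterate_succ_apply']
        exact ⟨by omega, fun h => hnd (dvd_trans (by norm_num) h)⟩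
    apply strictMono_nat_of_lt_succ
    intro k
    obtain ⟨ha, hb⟩ := inv k
    have := (p2653_key _ ha hb).1
    simpa [Function.iterate_succ_apply'] using this
  refine ⟨main, ?_⟩
  apply Set.infinite_of_injective_forall_mem (f := fun n : ℕ => 6 * n + 7)
  · intro a b h
    simp only [] at h
    omega
  · intro n
    have h6 : ¬ 6 ∣ (6 * n + 7) := by omega
    exact ((main (6 * n + 7) (by omega) h6).2.2.2).injective
end

section
/- For the permutation f : ℕ → ℕ given by f(6n) = 3n and f(12n + r_i) = 15n + s_i with (r_1,...,r_10) = (1,2,3,4,5,7,8,9,10,11), (s_1,...,s_10) = (1,2,4,5,7,8,10,11,13,14), the only cycles of f are the fixed points 0, 1 and 2; that is, f(x) = x iff x ∈ {0,1,2}, and for every x ∉ {0,1,2} there is no k ≥ 1 with f^k(x) = x. -/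
lemma key1 (x : ℕ) (h : x % 6 ≠ 0) (h3 : 3 ≤ x) :
    x < p2653 x ∧ p2653 x % 3 ≠ 0 := by
  have hd : p2653 x = 15 * (x / 12) + sigma2653 (x % 12) := by
    simp [p2653, h]
  have hr : x % 12 = 1 ∨ x % 12 = 2 ∨ x % 12 = 3 ∨ x % 12 = 4 ∨ x % 12 = 5 ∨
      x % 12 = 7 ∨ x % 12 = 8 ∨ x % 12 = 9 ∨ x % 12 = 10 ∨ x % 12 = 11 := by omega
  rcases hr with h'|h'|h'|h'|h'|h'|h'|h'|h'|h' <;>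
    rw [h'] at hd <;> simp [sigma2653] at hd <;> omega

lemma key2 (x : ℕ) (h : x % 6 ≠ 0) (h3 : 3 ≤ x) (k : ℕ) :
    x < p2653^[k + 1] x ∧ p2653^[k + 1] x % 3 ≠ 0 := by
  induction k with
  | zero => simpa using key1 x h h3
  | succ n ih =>
    rw [Function.iterate_succ_apply']
    have h6 : p2653^[n + 1] x % 6 ≠ 0 := by
      intro hc; exact ih.2 (by omega)
    have h3' : 3 ≤ p2653^[n + 1] x := by omega
    have := key1 _ h6 h3'
    exact ⟨lt_trans ih.1 this.1, this.2⟩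

lemma key3 (m : ℕ) : ∀ z : ℕ, z % 3 = 0 → 3 ≤ z →
    p2653^[m] z ≤ z ∨ p2653^[m] z % 3 ≠ 0 := by
  induction m with
  | zero => intro z _ _; exact Or.inl le_rfl
  | succ n ih =>
    intro z hz h3
    by_cases h6 : z % 6 = 0
    · have hf : p2653 z = z / 2 := by simp [p2653, h6]
      rw [Function.iterate_succ_apply, hf]
      rcases ih (z / 2) (by omega) (by omega) with h | h
      · exact Or.inl (le_trans h (by omega))
      · exact Or.inr h
    · exact Or.inr (key2 z h6 h3 n).2

/-- the only cycles of `P(2,6,5,3)` are the fixed points 0, 1, 2: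
`f x = x ↔ x ∈ {0,1,2}`, and no `x ∉ {0,1,2}` satisfies `f^[k] x = x` for `k ≥ 1`. -/
theorem stmt7 :
    (∀ x : ℕ, p2653 x = x ↔ x ∈ ({0, 1, 2} : Set ℕ)) ∧
      ∀ x : ℕ, x ∉ ({0, 1, 2} : Set ℕ) → ∀ k : ℕ, 1 ≤ k → p2653^[k] x ≠ x := by
  constructor
  · intro x
    constructor
    · intro hfx
      by_contra hx
      simp only [Set.mem_insert_iff, Set.mem_singleton_iff] at hx
      push_neg at hx
      have h3 : 3 ≤ x := by omega
      by_cases h6 : x % 6 = 0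
      · have : p2653 x = x / 2 := by simp [p2653, h6]
        omega
      · have := (key1 x h6 h3).1
        omega
    · intro hx
      simp only [Set.mem_insert_iff, Set.mem_singleton_iff] at hx
      rcases hx with rfl | rfl | rfl <;> simp [p2653, sigma2653]
  · intro x hx k hk
    simp only [Set.mem_insert_iff, Set.mem_singleton_iff] at hx
    push_neg at hx
    have h3 : 3 ≤ x := by omega
    by_cases h6 : x % 6 = 0
    · obtain ⟨m, rfl⟩ : ∃ m, k = m + 1 := ⟨k - 1, by omega⟩
      have hf : p2653 x = x / 2 := by simp [p2653, h6]
      rw [Function.iterate_succ_apply, hf]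
      intro hc
      rcases key3 m (x / 2) (by omega) (by omega) with h | h <;> omega
    · obtain ⟨m, rfl⟩ : ∃ m, k = m + 1 := ⟨k - 1, by omega⟩
      have := (key2 x h6 h3 m).1
      omega
end

section
/- Let a,b,c,d be positive integers with b>1, d>1, a < c, b > d, ab < cd, and a(b−1) = c(d−1). Let f = P(a,b,c,d). For every n ∈ ℕ with n > (ab−2)/(cd−ab) and every residue r with 1 ≤ r ≤ ab−1, r not divisible by b: if x = abn + r then f(x) > x. In other words, for sufficiently large x not divisible by b, f strictly increases; and for x = bn divisible by b, f(x) = dn < x. -/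
/-- for `f = P(a,b,c,d)` with `a < c`, `b > d`, `ab < cd`,
`a(b−1) = c(d−1)`: every `x = abn + r` with `r` a residue not divisible by `b`
and `n > (ab−2)/(cd−ab)` (i.e. `n(cd−ab) > ab−2`) satisfies `f x > x`; and every
positive `x = bn` divisible by `b` satisfies `f x = dn < x`. -/
theorem stmt19 (a b c d N : ℕ) (ha : 0 < a) (hc : 0 < c) (hb : 1 < b) (hd : 1 < d)
    (hac : a < c) (hbd : d < b) (habcd : a * b < c * d)
    (hNa : N = a * (b - 1)) (hNc : N = c * (d - 1))
    (r s : Fin N → ℕ) (hrmono : StrictMono r) (hsmono : StrictMono s)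
    (hrran : Set.range r = {x : ℕ | 0 < x ∧ x < a * b ∧ ¬ b ∣ x})
    (hsran : Set.range s = {x : ℕ | 0 < x ∧ x < c * d ∧ ¬ d ∣ x})
    (f : ℕ → ℕ)
    (hf1 : ∀ n : ℕ, f (b * n) = d * n)
    (hf2 : ∀ (n : ℕ) (i : Fin N), f (a * b * n + r i) = c * d * n + s i) :
    (∀ n ρ : ℕ, 0 < ρ → ρ < a * b → ¬ b ∣ ρ → a * b - 2 < n * (c * d - a * b) →
        a * b * n + ρ < f (a * b * n + ρ)) ∧
      ∀ n : ℕ, 0 < n → f (b * n) < b * n := by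
  constructor
  · intro n ρ hρ0 hρab hρb hn
    have hmem : ρ ∈ Set.range r := by rw [hrran]; exact ⟨hρ0, hρab, hρb⟩
    obtain ⟨i, hi⟩ := hmem
    have hs : 0 < s i := by
      have hm : s i ∈ Set.range s := ⟨i, rfl⟩
      rw [hsran] at hm; exact hm.1
    rw [← hi, hf2 n i, hi]
    obtain ⟨k, hk⟩ := Nat.exists_eq_add_of_lt habcd
    have h1 : c * d - a * b = k + 1 := by omega
    rw [h1] at hn
    have h2 : c * d * n = a * b * n + n * (k + 1) := by rw [hk]; ring
    rw [h2]
    have hab2 : 2 ≤ a * b := by nlinarith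
    have hn' : a * b ≤ n * (k + 1) + 1 := by omega
    linarith
  · intro n hn
    rw [hf1]
    exact Nat.mul_lt_mul_of_pos_right hbd hn
end
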